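/- (Adaptive FSAI determinant ratio) In the setting of the adaptive FSAI update, with H = FA, Δ = det((F A Fᵀ)_{kk}) and Δ^{(c)} = det((F^{(c)} A F^{(c)ᵀ})_{kk}), it holds that Δ^{(c)}/Δ = det(W_c − H_{kc}ᵀ H_{kk}⁻¹ H_{kc}) / det(W_c). -/

import Mathlib

open Matrix

/-- Scalar index type for a block structure with `n` blocks of sizes `m i`. -/
abbrev BIdx {n : ℕ} (m : Fin n → ℕ) := (i : Fin n) × Fin (m i)

/-- The `(i,j)` block of a block-structured matrix. -/
def blk {n : ℕ} {m : Fin n → ℕ} (A : Matrix (BIdx m) (BIdx m) ℝ) (i j : Fin n) :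
    Matrix (Fin (m i)) (Fin (m j)) ℝ :=
  fun a b => A ⟨i, a⟩ ⟨j, b⟩

/-- The block-diagonal part `diag_𝔅(A)` of a block-structured matrix. -/
def bdiag {n : ℕ} {m : Fin n → ℕ} (A : Matrix (BIdx m) (BIdx m) ℝ) :
    Matrix (BIdx m) (BIdx m) ℝ :=
  fun p q => if p.1 = q.1 then A p q else 0

/-- The block submatrix `A[S, T]` with block-row indices in `S` and block-column indices in `T`. -/
def subM {n : ℕ} {m : Fin n → ℕ} (A : Matrix (BIdx m) (BIdx m) ℝ) (S T : Finset (Fin n)) :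
    Matrix {p : BIdx m // p.1 ∈ S} {q : BIdx m // q.1 ∈ T} ℝ :=
  fun p q => A p.val q.val

/-- The block row submatrix `A[{i}, T]`. -/
def rowM {n : ℕ} {m : Fin n → ℕ} (A : Matrix (BIdx m) (BIdx m) ℝ) (i : Fin n)
    (T : Finset (Fin n)) : Matrix (Fin (m i)) {q : BIdx m // q.1 ∈ T} ℝ :=
  fun a q => A ⟨i, a⟩ q.val

/-- The block column submatrix `A[S, {i}]`. -/
def colM {n : ℕ} {m : Fin n → ℕ} (A : Matrix (BIdx m) (BIdx m) ℝ) (S : Finset (Fin n))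
    (i : Fin n) : Matrix {p : BIdx m // p.1 ∈ S} (Fin (m i)) ℝ :=
  fun p a => A p.val ⟨i, a⟩

/-- A block sparsity pattern, given by its rows `P i ⊆ {1,…,n}`, is lower triangular and
contains the diagonal. -/
def IsLowerPattern {n : ℕ} (P : Fin n → Finset (Fin n)) : Prop :=
  (∀ i, i ∈ P i) ∧ ∀ i j, j ∈ P i → j ≤ i

/-- `F` is the block-FSAI matrix for `A` based on the pattern `P`: identity diagonal blocks,
zero blocks outside the pattern, and `F[{i}, 𝒫̃ᵢ] = -A[{i}, 𝒫̃ᵢ] A[𝒫̃ᵢ, 𝒫̃ᵢ]⁻¹`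
where `𝒫̃ᵢ = Pᵢ \ {i}`. -/
def IsFSAI {n : ℕ} {m : Fin n → ℕ} (A F : Matrix (BIdx m) (BIdx m) ℝ)
    (P : Fin n → Finset (Fin n)) : Prop :=
  (∀ i, blk F i i = 1) ∧
  (∀ p q : BIdx m, p.1 ≠ q.1 → q.1 ∉ P p.1 → F p q = 0) ∧
  (∀ i, rowM F i ((P i).erase i) =
    -(rowM A i ((P i).erase i)) * (subM A ((P i).erase i) ((P i).erase i))⁻¹)

/-- `S` is the block-diagonal FSAI Schur-complement matrix:
`S_{ii} = A_{ii} - A[{i}, 𝒫̃ᵢ] A[𝒫̃ᵢ, 𝒫̃ᵢ]⁻¹ A[𝒫̃ᵢ, {i}]`. -/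
def IsFSAISchur {n : ℕ} {m : Fin n → ℕ} (A S : Matrix (BIdx m) (BIdx m) ℝ)
    (P : Fin n → Finset (Fin n)) : Prop :=
  (∀ p q : BIdx m, p.1 ≠ q.1 → S p q = 0) ∧
  (∀ i, blk S i i =
    blk A i i - rowM A i ((P i).erase i) * (subM A ((P i).erase i) ((P i).erase i))⁻¹ *
      colM A ((P i).erase i) i)

/-!
Write `T = 𝒫̃ₖ` and `S_{ij}(T) = A_{ij} - A[{i},T] A[T,T]⁻¹ A[T,{j}]` (`schurBlk A T i j`).
Block row `k` of `F` is `I[{k},:] + F[{k},T] I[T,:]`, so `H_{kj} = S_{kj}(T)` and `H[{k},T] = 0`;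
hence `(F A Fᵀ)_{kk} = H_{kk}`, and likewise for `F⁽ᶜ⁾` with `T ∪ {c}`, while `W_c = S_{cc}(T)`
and, by symmetry of `A`, `H_{kc}ᵀ = S_{ck}(T)`. A Schur complement determinant is a ratio of
principal minors, `det S_{kk}(T) = det A[T∪{k}] / det A[T]`, and eliminating first `T` and then
`k` from `A[T∪{k,c}]` gives `det(S_{cc} - S_{ck} S_{kk}⁻¹ S_{kc}) = det A[T∪{k,c}] / det A[T∪{k}]`.
Both sides of the claim are therefore `det A[T∪{k,c}] det A[T] / (det A[T∪{c}] det A[T∪{k}])`.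
-/

namespace Matrix

variable {α : Type*} {l n₁ n₂ o₁ : Type*}

theorem fromBlocks_sub [Sub α] (A : Matrix l n₁ α) (B : Matrix l n₂ α) (C : Matrix o₁ n₁ α)
    (D : Matrix o₁ n₂ α) (A' : Matrix l n₁ α) (B' : Matrix l n₂ α) (C' : Matrix o₁ n₁ α)
    (D' : Matrix o₁ n₂ α) :
    fromBlocks A B C D - fromBlocks A' B' C' D' =
      fromBlocks (A - A') (B - B') (C - C') (D - D') := by
  ext (i | i) (j | j) <;> rfl

theorem det_fromBlocks_fromCols_fromRows {R : Type*} [CommRing R] [Fintype l] [DecidableEq l]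
    [Fintype n₁] [DecidableEq n₁] [Fintype n₂] [DecidableEq n₂] (A : Matrix l l R)
    (B₁ : Matrix l n₁ R) (B₂ : Matrix l n₂ R) (C₁ : Matrix n₁ l R) (C₂ : Matrix n₂ l R)
    (D₁₁ : Matrix n₁ n₁ R) (D₁₂ : Matrix n₁ n₂ R) (D₂₁ : Matrix n₂ n₁ R) (D₂₂ : Matrix n₂ n₂ R)
    (hA : IsUnit A.det) (hS : IsUnit (D₁₁ - C₁ * A⁻¹ * B₁).det) :
    (fromBlocks A (fromCols B₁ B₂) (fromRows C₁ C₂) (fromBlocks D₁₁ D₁₂ D₂₁ D₂₂)).det =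
      A.det * ((D₁₁ - C₁ * A⁻¹ * B₁).det *
        ((D₂₂ - C₂ * A⁻¹ * B₂) -
          (D₂₁ - C₂ * A⁻¹ * B₁) * (D₁₁ - C₁ * A⁻¹ * B₁)⁻¹ * (D₁₂ - C₁ * A⁻¹ * B₂)).det) := by
  let := invertibleOfIsUnitDet A hA
  let := invertibleOfIsUnitDet _ hS
  rw [det_fromBlocks₁₁, invOf_eq_nonsing_inv, fromRows_mul, fromRows_mul_fromCols, fromBlocks_sub,
    det_fromBlocks₁₁, invOf_eq_nonsing_inv]

theorem one_submatrix_id_mul {ι κ : Type*} [Fintype ι] [DecidableEq ι] [NonAssocSemiring α]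
    (f : l → ι) (B : Matrix ι κ α) : (1 : Matrix ι ι α).submatrix f id * B = B.submatrix f id :=
  one_submatrix_mul f (Equiv.refl ι) B

end Matrix

section BlockSchur

variable {n : ℕ} {m : Fin n → ℕ}

noncomputable def schurBlk (A : Matrix (BIdx m) (BIdx m) ℝ) (T : Finset (Fin n)) (i j : Fin n) :
    Matrix (Fin (m i)) (Fin (m j)) ℝ :=
  blk A i j - rowM A i T * (subM A T T)⁻¹ * colM A T j

section FSAI

variable {A F : Matrix (BIdx m) (BIdx m) ℝ} {P : Fin n → Finset (Fin n)}

theorem IsFSAI.blockRow_eq (hF : IsFSAI A F P) (k : Fin n) :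
    F.submatrix (Sigma.mk k) id = (1 : Matrix (BIdx m) (BIdx m) ℝ).submatrix (Sigma.mk k) id +
      rowM F k ((P k).erase k) * (1 : Matrix (BIdx m) (BIdx m) ℝ).submatrix
        (Subtype.val : {q // q.1 ∈ (P k).erase k} → _) id := by
  obtain ⟨hdiag, hzero, -⟩ := hF
  ext a ⟨i, b⟩
  simp only [Matrix.add_apply, mul_apply, submatrix_apply, id, one_apply, mul_ite, mul_one,
    mul_zero]
  by_cases hi : i ∈ (P k).erase k
  · rw [Fintype.sum_eq_single (⟨⟨i, b⟩, hi⟩ : {q : BIdx m // q.1 ∈ (P k).erase k})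
        fun q hq => if_neg fun h => hq (Subtype.ext h),
      if_pos rfl, if_neg fun h => Finset.ne_of_mem_erase hi (congrArg Sigma.fst h).symm, zero_add]
    rfl
  · rw [Finset.sum_eq_zero fun q _ => if_neg fun h => hi (by simpa [h] using q.2), add_zero]
    by_cases hik : i = k
    · subst hik
      simpa [blk, one_apply] using congrFun (congrFun (hdiag i) a) b
    · rw [if_neg fun h => hik (congrArg Sigma.fst h).symm]
      exact hzero _ _ (Ne.symm hik) fun h => hi (Finset.mem_erase.2 ⟨hik, h⟩)

theorem IsFSAI.blockRow_mul {κ : Type*} (hF : IsFSAI A F P) (k : Fin n)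
    (B : Matrix (BIdx m) κ ℝ) :
    (F * B).submatrix (Sigma.mk k) id =
      B.submatrix (Sigma.mk k) id + rowM F k ((P k).erase k) *
        B.submatrix (Subtype.val : {q // q.1 ∈ (P k).erase k} → _) id := by
  rw [show (F * B).submatrix (Sigma.mk k) id = F.submatrix (Sigma.mk k) id * B from rfl,
    hF.blockRow_eq, Matrix.add_mul, Matrix.mul_assoc, one_submatrix_id_mul,
    one_submatrix_id_mul]

theorem IsFSAI.blk_mul (hF : IsFSAI A F P) (k j : Fin n) :
    blk (F * A) k j = schurBlk A ((P k).erase k) k j := by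
  have h := congrArg (·.submatrix id (Sigma.mk j)) (hF.blockRow_mul k A)
  change blk (F * A) k j = blk A k j + rowM F k ((P k).erase k) * colM A ((P k).erase k) j at h
  rw [h, hF.2.2 k, schurBlk, Matrix.neg_mul, Matrix.neg_mul, ← sub_eq_add_neg, Matrix.mul_assoc]

theorem IsFSAI.rowM_mul_eq_zero (hF : IsFSAI A F P) (k : Fin n)
    (hT : IsUnit (subM A ((P k).erase k) ((P k).erase k)).det) :
    rowM (F * A) k ((P k).erase k) = 0 := by
  have h := congrArg (·.submatrix id (Subtype.val : {q : BIdx m // q.1 ∈ (P k).erase k} → _))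
    (hF.blockRow_mul k A)
  change rowM (F * A) k ((P k).erase k) = rowM A k ((P k).erase k) +
    rowM F k ((P k).erase k) * subM A ((P k).erase k) ((P k).erase k) at h
  rw [h, hF.2.2 k]
  simp only [Matrix.neg_mul, Matrix.mul_assoc, nonsing_inv_mul _ hT, Matrix.mul_one,
    add_neg_cancel]

theorem IsFSAI.blk_mul_mul_transpose (hF : IsFSAI A F P) (k : Fin n)
    (hT : IsUnit (subM A ((P k).erase k) ((P k).erase k)).det) :
    blk (F * A * Fᵀ) k k = blk (F * A) k k := by
  have h := congrArg (·.submatrix id (Sigma.mk k)) (hF.blockRow_mul k (F * A)ᵀ)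
  change blk (F * (F * A)ᵀ) k k =
    (blk (F * A) k k)ᵀ + rowM F k ((P k).erase k) * (rowM (F * A) k ((P k).erase k))ᵀ at h
  rw [hF.rowM_mul_eq_zero k hT, transpose_zero, Matrix.mul_zero, add_zero] at h
  rw [← transpose_transpose (F * A * Fᵀ), transpose_mul, transpose_transpose]
  exact congrArg transpose h

end FSAI

theorem schurBlk_transpose (A : Matrix (BIdx m) (BIdx m) ℝ) (T : Finset (Fin n)) (i j : Fin n) :
    (schurBlk A T i j)ᵀ = schurBlk Aᵀ T j i := by
  rw [schurBlk, schurBlk, transpose_sub, transpose_mul, transpose_mul, transpose_nonsing_inv,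
    Matrix.mul_assoc]
  rfl

theorem Matrix.PosDef.det_subM_pos {A : Matrix (BIdx m) (BIdx m) ℝ} (hA : A.PosDef)
    (T : Finset (Fin n)) : 0 < (subM A T T).det :=
  (hA.submatrix Subtype.val_injective).det_pos

def insertEquiv (T : Finset (Fin n)) (k : Fin n) (hk : k ∉ T) :
    ({p : BIdx m // p.1 ∈ T} ⊕ Fin (m k)) ≃ {p : BIdx m // p.1 ∈ insert k T} :=
  ((Equiv.refl _).sumCongr (Equiv.sigmaSubtype k).symm).trans <|
    (subtypeOrEquiv (fun p : BIdx m => p.1 ∈ T) (fun p => p.1 = k)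
      (Pi.disjoint_iff.2 fun _ => Prop.disjoint_iff.2 fun h => hk (h.2 ▸ h.1))).symm.trans
      (Equiv.subtypeEquivRight fun _ => by rw [Finset.mem_insert, or_comm])

theorem subM_insert_submatrix_insertEquiv (A : Matrix (BIdx m) (BIdx m) ℝ) {T : Finset (Fin n)}
    {k : Fin n} (hk : k ∉ T) :
    (subM A (insert k T) (insert k T)).submatrix (insertEquiv T k hk) (insertEquiv T k hk) =
      fromBlocks (subM A T T) (colM A T k) (rowM A k T) (blk A k k) := by
  ext (p | a) (q | b) <;> rfl

theorem det_subM_insert (A : Matrix (BIdx m) (BIdx m) ℝ) {T : Finset (Fin n)} {k : Fin n}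
    (hk : k ∉ T) (hT : (subM A T T).det ≠ 0) :
    (subM A (insert k T) (insert k T)).det = (subM A T T).det * (schurBlk A T k k).det := by
  let := invertibleOfIsUnitDet _ hT.isUnit
  rw [← det_submatrix_equiv_self (insertEquiv T k hk), subM_insert_submatrix_insertEquiv,
    det_fromBlocks₁₁, invOf_eq_nonsing_inv]
  rfl

theorem det_schurBlk_self (A : Matrix (BIdx m) (BIdx m) ℝ) {T : Finset (Fin n)} {k : Fin n}
    (hk : k ∉ T) (hT : (subM A T T).det ≠ 0) :
    (schurBlk A T k k).det = (subM A (insert k T) (insert k T)).det / (subM A T T).det := by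
  rw [det_subM_insert A hk hT, mul_div_cancel_left₀ _ hT]

theorem det_iterated_schurBlk (A : Matrix (BIdx m) (BIdx m) ℝ) {T : Finset (Fin n)}
    {k c : Fin n} (hk : k ∉ T) (hc : c ∉ insert k T) (hT : (subM A T T).det ≠ 0)
    (hkT : (subM A (insert k T) (insert k T)).det ≠ 0) :
    (schurBlk A T c c - schurBlk A T c k * (schurBlk A T k k)⁻¹ * schurBlk A T k c).det =
      (subM A (insert c (insert k T)) (insert c (insert k T))).det /
        (subM A (insert k T) (insert k T)).det := by
  have hS : (schurBlk A T k k).det ≠ 0 := right_ne_zero_of_mul (det_subM_insert A hk hT ▸ hkT)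
  let e := (Equiv.sumAssoc _ _ _).symm.trans
    (((insertEquiv T k hk).sumCongr (Equiv.refl (Fin (m c)))).trans (insertEquiv _ c hc))
  have he : (subM A (insert c (insert k T)) (insert c (insert k T))).submatrix e e =
      fromBlocks (subM A T T) (fromCols (colM A T k) (colM A T c))
        (fromRows (rowM A k T) (rowM A c T))
        (fromBlocks (blk A k k) (blk A k c) (blk A c k) (blk A c c)) := by
    ext (p | a | b) (q | a' | b') <;> rfl
  rw [eq_div_iff hkT, ← det_submatrix_equiv_self e, he,
    det_fromBlocks_fromCols_fromRows _ _ _ _ _ _ _ _ _ hT.isUnit hS.isUnit,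
    det_subM_insert A hk hT, mul_comm, mul_assoc]
  rfl

end BlockSchur

theorem fsai_adaptive_det_ratio_general {n : ℕ} {m : Fin n → ℕ}
    (A F F' : Matrix (BIdx m) (BIdx m) ℝ) (P : Fin n → Finset (Fin n))
    (hA : A.PosDef)
    (k c : Fin n) (hck : c < k) (hcP : c ∉ P k)
    (hF : IsFSAI A F P)
    (hF' : IsFSAI A F' (Function.update P k (insert c (P k)))) :
    (blk (F' * A * F'ᵀ) k k).det / (blk (F * A * Fᵀ) k k).det =
      ((blk A c c - rowM A c ((P k).erase k) *
            (subM A ((P k).erase k) ((P k).erase k))⁻¹ * colM A ((P k).erase k) c) -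
          (blk (F * A) k c)ᵀ * (blk (F * A) k k)⁻¹ * blk (F * A) k c).det /
        (blk A c c - rowM A c ((P k).erase k) *
            (subM A ((P k).erase k) ((P k).erase k))⁻¹ * colM A ((P k).erase k) c).det := by
  set T := (P k).erase k
  have hkT : k ∉ T := Finset.notMem_erase k _
  have hcT : c ∉ T := fun h => hcP (Finset.mem_of_mem_erase h)
  have hT' : (Function.update P k (insert c (P k)) k).erase k = insert c T := by
    rw [Function.update_self, Finset.erase_insert_of_ne hck.ne]
  have hd (S : Finset (Fin n)) : (subM A S S).det ≠ 0 := (hA.det_subM_pos S).ne'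
  have hAt : Aᵀ = A := IsSymm.eq (by simpa using hA.1)
  have hΔ : (blk (F * A * Fᵀ) k k).det =
      (subM A (insert k T) (insert k T)).det / (subM A T T).det := by
    rw [hF.blk_mul_mul_transpose k (hd T).isUnit, hF.blk_mul, det_schurBlk_self A hkT (hd T)]
  have hΔ' : (blk (F' * A * F'ᵀ) k k).det =
      (subM A (insert k (insert c T)) (insert k (insert c T))).det /
        (subM A (insert c T) (insert c T)).det := by
    rw [hF'.blk_mul_mul_transpose k (hT' ▸ (hd _).isUnit), hF'.blk_mul, hT',
      det_schurBlk_self A (by simp [hck.ne', hkT]) (hd _)]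
  have hZ : (schurBlk A T c c - (blk (F * A) k c)ᵀ * (blk (F * A) k k)⁻¹ * blk (F * A) k c).det =
      (subM A (insert c (insert k T)) (insert c (insert k T))).det /
        (subM A (insert k T) (insert k T)).det := by
    rw [hF.blk_mul, hF.blk_mul, schurBlk_transpose, hAt,
      det_iterated_schurBlk A hkT (by simp [hck.ne, hcT]) (hd _) (hd _)]
  rw [← schurBlk, hΔ, hΔ', hZ, det_schurBlk_self A hcT (hd T), Finset.insert_comm]
  field_simp

/-- (Adaptive FSAI determinant ratio) With `H = FA`, `Δ = det((F A Fᵀ)_{kk})`,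
`Δ⁽ᶜ⁾ = det((F⁽ᶜ⁾ A F⁽ᶜ⁾ᵀ)_{kk})`, and
`W_c = A_{cc} - A[{c},𝒫̃ₖ] A[𝒫̃ₖ,𝒫̃ₖ]⁻¹ A[𝒫̃ₖ,{c}]`, one has
`Δ⁽ᶜ⁾/Δ = det(W_c - H_{kc}ᵀ H_{kk}⁻¹ H_{kc}) / det(W_c)`. -/
theorem fsai_adaptive_det_ratio {n : ℕ} {m : Fin n → ℕ}
    (A F F' : Matrix (BIdx m) (BIdx m) ℝ) (P : Fin n → Finset (Fin n))
    (hA : A.PosDef) (hP : IsLowerPattern P)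
    (k c : Fin n) (hck : c < k) (hcP : c ∉ P k)
    (hF : IsFSAI A F P)
    (hF' : IsFSAI A F' (Function.update P k (insert c (P k)))) :
    (blk (F' * A * F'ᵀ) k k).det / (blk (F * A * Fᵀ) k k).det =
      ((blk A c c - rowM A c ((P k).erase k) *
            (subM A ((P k).erase k) ((P k).erase k))⁻¹ * colM A ((P k).erase k) c) -
          (blk (F * A) k c)ᵀ * (blk (F * A) k k)⁻¹ * blk (F * A) k c).det /
        (blk A c c - rowM A c ((P k).erase k) *
            (subM A ((P k).erase k) ((P k).erase k))⁻¹ * colM A ((P k).erase k) c).det :=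
  fsai_adaptive_det_ratio_general A F F' P hA k c hck hcP hF hF'
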